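/- Let F : ℝ → ℝ be the Gumbel min cumulative distribution function, F(t) = 1 − exp(−exp(t)). Then both t ↦ log F(t) and t ↦ log(1 − F(t)) are strictly concave on ℝ. -/

import Mathlib

/-!
The derivative of `t ↦ log (1 - exp (-exp t))` is `φ (exp t)` with `φ x = x / (exp x - 1)`, and `φ`
is strictly decreasing on `(0, ∞)` because its reciprocal `(exp x - 1) / x` is the slope of the
strictly convex `exp` between `0` and `x`. The second function is simply `t ↦ -exp t`.
-/

open Real Set

theorem strictAntiOn_div_exp_sub_one : StrictAntiOn (fun x : ℝ => x / (exp x - 1)) (Ioi 0) := by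
  intro a ha b hb hab
  have hslope : (exp a - 1) / a < (exp b - 1) / b := by
    simpa using strictConvexOn_exp.secant_strict_mono (mem_univ 0) (mem_univ a) (mem_univ b)
      (ne_of_gt ha) (ne_of_gt hb) hab
  have hpos : 0 < (exp a - 1) / a := div_pos (sub_pos.2 (one_lt_exp_iff.2 ha)) ha
  simpa only [inv_div] using inv_strictAntiOn hpos (hpos.trans hslope) hslope

theorem hasDerivAt_log_one_sub_exp_neg_exp (t : ℝ) :
    HasDerivAt (fun t => log (1 - exp (-exp t))) (exp t / (exp (exp t) - 1)) t := by
  have hpos : 0 < 1 - exp (-exp t) := sub_pos.2 (exp_lt_one_iff.2 (neg_neg_of_pos (exp_pos t)))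
  convert ((hasDerivAt_exp t).fun_neg.exp.const_sub 1).log hpos.ne' using 1
  rw [exp_neg]
  field_simp [(sub_pos.2 (one_lt_exp_iff.2 (exp_pos t))).ne']

/-- For the Gumbel min cdf `F(t) = 1 − exp(−exp(t))`, both `log F` and `log (1 − F)` are
strictly concave on `ℝ`. -/
theorem gumbel_min_log_cdf_strictly_concave :
    StrictConcaveOn ℝ Set.univ
      (fun t : ℝ => Real.log (1 - Real.exp (-Real.exp t))) ∧
    StrictConcaveOn ℝ Set.univ
      (fun t : ℝ => Real.log (1 - (1 - Real.exp (-Real.exp t)))) := by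
  constructor
  · have hderiv : deriv (fun t => log (1 - exp (-exp t))) = fun t => exp t / (exp (exp t) - 1) :=
      funext fun t => (hasDerivAt_log_one_sub_exp_neg_exp t).deriv
    refine StrictAnti.strictConcaveOn_univ_of_deriv
      (continuous_iff_continuousAt.2 fun t => (hasDerivAt_log_one_sub_exp_neg_exp t).continuousAt)
      ?_
    rw [hderiv]
    intro s t hst
    exact strictAntiOn_div_exp_sub_one (exp_pos s) (exp_pos t) (exp_lt_exp.2 hst)
  · simp only [sub_sub_cancel, log_exp]
    exact strictConvexOn_exp.neg
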